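/- Let n be a natural number and let f : ℕ → ℕ be a finitely supported function. Suppose f 0 = 0 and f 1 = 0, suppose Σ_{m ≥ 1} f m = 2n + 2, suppose Σ_{m ≥ 1} m·f m = 6n, and suppose 2·(f 2) ≤ Σ_{m ≥ 4} ⌊2m/3⌋·f m. Then 2·(f 2) + f 3 + 4 ≤ 2n. (This is the second counting step in the proof of the paper's Theorem 4: since each bigon is adjacent to two distinct m-gons with m > 3 and each m-gon is adjacent to at most ⌊2m/3⌋ ≤ m − 2 bigons, one obtains 2f₂ ≤ Σ_{m ≥ 4} (m − 2)·f m = 2n − 4 − f₃.) -/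

import Mathlib

/-! Subtracting twice the face count `Σ f m = 2n + 2` from the edge count `Σ m f m = 6n`
leaves `2n - 4 = f 3 + Σ_{m ≥ 4} (m - 2) f m` once `f 1 = 0`. Since `⌊2m/3⌋ ≤ m - 2` for
`m ≥ 4`, the bigon bound gives `2 f 2 ≤ Σ_{m ≥ 4} (m - 2) f m`, and the two combine. -/

namespace Finsupp

lemma sum_weighted_le_sum_sub_two (f : ℕ →₀ ℕ) :
    f.sum (fun m v => if 4 ≤ m then (2 * m / 3) * v else 0) ≤
      f.sum (fun m v => if 4 ≤ m then (m - 2) * v else 0) :=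
  Finset.sum_le_sum fun m _ => by
    dsimp only
    split_ifs with hm
    · exact Nat.mul_le_mul_right _ (by omega)
    · exact le_rfl

/-- Edge count minus twice the face count, rearranged so that no truncated subtraction occurs. -/
lemma sum_mul_add_eq_two_mul_sum_add (f : ℕ →₀ ℕ) :
    f.sum (fun m v => if 1 ≤ m then m * v else 0) + f 1 =
      2 * f.sum (fun m v => if 1 ≤ m then v else 0) + f 3 +
        f.sum (fun m v => if 4 ≤ m then (m - 2) * v else 0) := by
  have hpointwise : ∀ m v : ℕ,
      (if 1 ≤ m then m * v else 0) + (if m = 1 then v else 0) =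
        2 * (if 1 ≤ m then v else 0) + (if m = 3 then v else 0) +
          (if 4 ≤ m then (m - 2) * v else 0) := by
    intro m v
    rcases Nat.lt_or_ge m 4 with hm | hm
    · interval_cases m <;> simp <;> ring
    · obtain ⟨k, rfl⟩ := Nat.exists_eq_add_of_le hm
      simp only [show 1 ≤ 4 + k by omega, show 4 + k ≠ 1 by omega, show 4 + k ≠ 3 by omega,
        hm, if_true, if_false, show 4 + k - 2 = k + 2 by omega]
      ring
  rw [← sum_ite_self_eq' f 1, ← sum_ite_self_eq' f 3, ← sum_add, mul_sum, ← sum_add, ← sum_add]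
  exact Finset.sum_congr rfl fun m _ => hpointwise m (f m)

end Finsupp

theorem stmt3_general (n : ℕ) (f : ℕ →₀ ℕ)
    (h1 : f 1 = 0)
    (hF : f.sum (fun m v => if 1 ≤ m then v else 0) = 2 * n + 2)
    (hE : f.sum (fun m v => if 1 ≤ m then m * v else 0) = 6 * n)
    (hb : 2 * f 2 ≤ f.sum (fun m v => if 4 ≤ m then (2 * m / 3) * v else 0)) :
    2 * f 2 + f 3 + 4 ≤ 2 * n := by
  have hcount := f.sum_mul_add_eq_two_mul_sum_add
  have hbound := f.sum_weighted_le_sum_sub_two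
  rw [hF, hE, h1] at hcount
  omega

/-- Second counting step in the proof of Theorem 4: for a finitely supported
face-count vector `f` with `f 0 = 0`, `f 1 = 0`, `Σ_{m ≥ 1} f m = 2n + 2`,
`Σ_{m ≥ 1} m·f m = 6n`, and the bigon-adjacency bound
`2·f 2 ≤ Σ_{m ≥ 4} ⌊2m/3⌋·f m`, we get `2·f 2 + f 3 + 4 ≤ 2n`. -/
theorem stmt3 (n : ℕ) (f : ℕ →₀ ℕ)
    (h0 : f 0 = 0) (h1 : f 1 = 0)
    (hF : f.sum (fun m v => if 1 ≤ m then v else 0) = 2 * n + 2)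
    (hE : f.sum (fun m v => if 1 ≤ m then m * v else 0) = 6 * n)
    (hb : 2 * f 2 ≤ f.sum (fun m v => if 4 ≤ m then (2 * m / 3) * v else 0)) :
    2 * f 2 + f 3 + 4 ≤ 2 * n :=
  stmt3_general n f h1 hF hE hb
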